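/- arXiv:0801.0396 — 3 statements merged into one kernel-verified Lean document; each statement's English description precedes it below -/
import Mathlib

section
/- Let U be a finite p-group acting on a finite abelian p-group M by automorphisms, and let N ≤ M be a U-invariant subgroup. For x ∈ M, if the stabilizer of x + N in M/N has index in U equal to p times the index of the stabilizer of x's image at the previous step, then the orbit of x under U meets each coset of N in M in a single orbit. (Dimension-counting criterion for inert points.) -/
open Pointwise in
theorem stmt8 (p : ℕ) (hp : p.Prime) (U M : Type*) [Group U] [Finite U]
    [AddCommGroup M] [Finite M] [DistribMulAction U M]
    (hU : IsPGroup p U) (hM : IsPGroup p (Multiplicative M))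
    (N : AddSubgroup M) (hN : ∀ u : U, ∀ n ∈ N, u • n ∈ N)
    (hNcard : Nat.card N = p) (x : M)
    (hidx : (MulAction.stabilizer U x).index
      = p * (MulAction.stabilizer U (x +ᵥ (N : Set M))).index) :
    ∀ n ∈ N, x + n ∈ MulAction.orbit U x := by
  set B : Set M := x +ᵥ (N : Set M) with hB
  set H := MulAction.stabilizer U B with hHdef
  -- the action of any u on a coset y +ᵥ N gives (u • y) +ᵥ N
  have hSB : ∀ (u : U) (y : M), u • (y +ᵥ (N : Set M)) = (u • y) +ᵥ (N : Set M) := by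
    intro u y
    ext z
    constructor
    · rintro ⟨w, ⟨n, hn, rfl⟩, rfl⟩
      exact ⟨u • n, hN u n hn, by show u • y + u • n = u • (y + n); rw [smul_add]⟩
    · rintro ⟨n, hn, rfl⟩
      refine ⟨y + u⁻¹ • n, ⟨u⁻¹ • n, hN u⁻¹ n hn, rfl⟩, ?_⟩
      show u • (y + u⁻¹ • n) = u • y + n
      rw [smul_add, smul_inv_smul]
  have hle : MulAction.stabilizer U x ≤ H := by
    intro u hu
    have : u • x = x := hu
    simp only [hHdef, MulAction.mem_stabilizer_iff, hB, hSB, this]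
  have key : (MulAction.stabilizer U x).subgroupOf H = MulAction.stabilizer H x := by
    ext; rfl
  have hHne : H.index ≠ 0 := Subgroup.index_ne_zero_of_finite
  have hrel : (MulAction.stabilizer U x).relIndex H = p := by
    have := Subgroup.relIndex_mul_index hle
    rw [hidx] at this
    exact Nat.eq_of_mul_eq_mul_right (Nat.pos_of_ne_zero hHne) this
  have horbcard : (MulAction.orbit H x).ncard = p := by
    rw [← MulAction.index_stabilizer, ← key, ← Subgroup.relIndex, hrel]
  have horbsub : MulAction.orbit H x ⊆ B := by
    rintro _ ⟨h, rfl⟩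
    have hmem : (h : U) • B = B := h.2
    have : (h : U) • x ∈ (h : U) • B := by
      refine Set.smul_mem_smul_set ?_
      exact ⟨0, N.zero_mem, add_zero x⟩
    rw [hmem] at this
    exact this
  have hBcard : B.ncard = p := by
    rw [hB, Set.ncard_vadd_set, ← Nat.card_coe_set_eq]
    simpa using hNcard
  have horbeq : MulAction.orbit H x = B := by
    exact Set.eq_of_subset_of_ncard_le horbsub (by rw [horbcard, hBcard]) B.toFinite
  intro n hn
  have : x + n ∈ B := ⟨n, hn, rfl⟩
  rw [← horbeq] at this
  obtain ⟨h, hh⟩ := this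
  exact ⟨(h : U), hh⟩
end

section
/- For any prime power q, the number of conjugacy classes of U_4(q) evaluated as a polynomial satisfies k(U_4(q)) = 2q^3 + q^2 − 2q, and hence k(U_4(q)) ≡ 0 (mod q) and k(U_4(q)) ≡ 1 (mod q−1). -/
open Matrix

def IsUnitriangular {n : ℕ} {F : Type*} [Field F] (M : Matrix (Fin n) (Fin n) F) : Prop :=
  (∀ i, M i i = 1) ∧ ∀ i j : Fin n, j < i → M i j = 0

theorem IsUnitriangular.blockTriangular {n : ℕ} {F : Type*} [Field F]
    {M : Matrix (Fin n) (Fin n) F} (h : IsUnitriangular M) :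
    M.BlockTriangular id := fun _ _ hij => h.2 _ _ hij

theorem diag_mul_of_tri {n : ℕ} {F : Type*} [Field F]
    {A B : Matrix (Fin n) (Fin n) F} (hA : A.BlockTriangular id)
    (hB : B.BlockTriangular id) (i : Fin n) : (A * B) i i = A i i * B i i := by
  rw [Matrix.mul_apply]
  refine Finset.sum_eq_single i ?_ (by simp)
  intro k _ hk
  rcases lt_or_gt_of_ne hk with h | h
  · rw [hA (show (id k : Fin n) < id i from h), zero_mul]
  · rw [hB (show (id i : Fin n) < id k from h), mul_zero]

def UT (n : ℕ) (F : Type*) [Field F] : Subgroup (GL (Fin n) F) where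
  carrier := {M | IsUnitriangular (M : Matrix (Fin n) (Fin n) F)}
  one_mem' := ⟨fun i => by simp, fun i j hij => by
    simp [Matrix.one_apply, (ne_of_lt hij).symm]⟩
  mul_mem' := by
    rintro A B ⟨hA1, hA2⟩ ⟨hB1, hB2⟩
    constructor
    · intro i
      have := diag_mul_of_tri (A := (A : Matrix (Fin n) (Fin n) F)) (B := B)
        (fun _ _ h => hA2 _ _ h) (fun _ _ h => hB2 _ _ h) i
      simpa [hA1 i, hB1 i] using this
    · intro i j hij
      have := Matrix.BlockTriangular.mul (M := (A : Matrix (Fin n) (Fin n) F))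
        (N := (B : Matrix (Fin n) (Fin n) F)) (b := id)
        (fun _ _ h => hA2 _ _ h) (fun _ _ h => hB2 _ _ h)
      exact this hij
  inv_mem' := by
    rintro A ⟨hA1, hA2⟩
    have hbt : (A : Matrix (Fin n) (Fin n) F).BlockTriangular id := fun _ _ h => hA2 _ _ h
    have : Invertible (A : Matrix (Fin n) (Fin n) F) := A.invertible
    have hinv : ((A : Matrix (Fin n) (Fin n) F)⁻¹).BlockTriangular id :=
      blockTriangular_inv_of_blockTriangular hbt
    have hco : ((A⁻¹ : GL (Fin n) F) : Matrix (Fin n) (Fin n) F)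
        = (A : Matrix (Fin n) (Fin n) F)⁻¹ := by
      simp [Matrix.coe_units_inv]
    constructor
    · intro i
      have h1 : ((A : Matrix (Fin n) (Fin n) F) * (A : Matrix (Fin n) (Fin n) F)⁻¹) i i
          = (1 : Matrix (Fin n) (Fin n) F) i i := by
        rw [Matrix.mul_nonsing_inv _ (isUnit_det_of_invertible _)]
      rw [diag_mul_of_tri hbt hinv, hA1 i, one_mul] at h1
      rw [hco]
      simpa [Matrix.one_apply] using h1
    · intro i j hij
      rw [hco]
      exact hinv hij

section
variable {F : Type*} [Field F]

def mat (x : F × F × F) (y : F × F) (z : F) : Matrix (Fin 4) (Fin 4) F :=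
  !![1, x.1, y.1, z; 0, 1, x.2.1, y.2; 0, 0, 1, x.2.2; 0, 0, 0, 1]

lemma mat_mul (x x' : F × F × F) (y y' : F × F) (z z' : F) :
    mat x y z * mat x' y' z' =
      mat (x.1 + x'.1, x.2.1 + x'.2.1, x.2.2 + x'.2.2)
        (y.1 + y'.1 + x.1 * x'.2.1, y.2 + y'.2 + x.2.1 * x'.2.2)
        (z + z' + x.1 * y'.2 + y.1 * x'.2.2) := by
  ext i j
  fin_cases i <;> fin_cases j <;>
    simp [mat, Matrix.mul_apply, Fin.sum_univ_four, Matrix.vecHead, Matrix.vecTail] <;> ring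

lemma mat_one : (mat (0, 0, 0) (0, 0) 0 : Matrix (Fin 4) (Fin 4) F) = 1 := by
  ext i j
  fin_cases i <;> fin_cases j <;> simp [mat, Matrix.one_apply, Matrix.vecHead, Matrix.vecTail]

lemma mat_congr {x x' : F × F × F} {y y' : F × F} {z z' : F}
    (hx : x = x') (hy : y = y') (hz : z = z') : mat x y z = mat x' y' z' := by
  rw [hx, hy, hz]

lemma mat_inj {x x' : F × F × F} {y y' : F × F} {z z' : F}
    (h : mat x y z = mat x' y' z') : x = x' ∧ y = y' ∧ z = z' := by
  obtain ⟨x1, x2, x3⟩ := x; obtain ⟨x1', x2', x3'⟩ := x'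
  obtain ⟨y1, y2⟩ := y; obtain ⟨y1', y2'⟩ := y'
  have h01 := congrFun (congrFun h 0) 1
  have h12 := congrFun (congrFun h 1) 2
  have h23 := congrFun (congrFun h 2) 3
  have h02 := congrFun (congrFun h 0) 2
  have h13 := congrFun (congrFun h 1) 3
  have h03 := congrFun (congrFun h 0) 3
  simp [mat] at h01 h12 h23 h02 h13 h03
  exact ⟨by simp [h01, h12, h23], by simp [h02, h13], h03⟩

end

section
variable {F : Type*} [Field F]

noncomputable def matUnit (x : F × F × F) (y : F × F) (z : F) : GL (Fin 4) F :=
  ⟨mat x y z,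
   mat (-x.1, -x.2.1, -x.2.2) (x.1 * x.2.1 - y.1, x.2.1 * x.2.2 - y.2)
     (-z - x.1 * x.2.1 * x.2.2 + x.1 * y.2 + y.1 * x.2.2),
   by
     rw [mat_mul]
     exact (mat_congr (Prod.ext (by ring) (Prod.ext (by ring) (by ring)))
       (Prod.ext (by ring) (by ring)) (by ring)).trans mat_one,
   by
     rw [mat_mul]
     exact (mat_congr (Prod.ext (by ring) (Prod.ext (by ring) (by ring)))
       (Prod.ext (by ring) (by ring)) (by ring)).trans mat_one⟩

lemma matUnit_mem (x : F × F × F) (y : F × F) (z : F) : matUnit x y z ∈ UT 4 F := by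
  constructor
  · intro i; fin_cases i <;> simp [matUnit, mat]
  · intro i j hij
    fin_cases i <;> fin_cases j <;>
      first
        | exact absurd hij (by decide)
        | simp [matUnit, mat, Matrix.vecHead, Matrix.vecTail]

noncomputable def toUT (x : F × F × F) (y : F × F) (z : F) : UT 4 F :=
  ⟨matUnit x y z, matUnit_mem x y z⟩

noncomputable def utEquiv : (((F × F × F) × (F × F)) × F) ≃ UT 4 F where
  toFun v := toUT v.1.1 v.1.2 v.2
  invFun u := (((u.val.val 0 1, u.val.val 1 2, u.val.val 2 3),
      (u.val.val 0 2, u.val.val 1 3)), u.val.val 0 3)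
  left_inv v := by
    obtain ⟨⟨⟨x1, x2, x3⟩, y1, y2⟩, z⟩ := v
    simp [toUT, matUnit, mat]
  right_inv u := by
    obtain ⟨u, hu1, hu2⟩ := u
    refine Subtype.ext (Units.ext ?_)
    ext i j
    fin_cases i <;> fin_cases j <;>
      simp [toUT, matUnit, mat, Matrix.vecHead, Matrix.vecTail] <;>
      first
        | exact (hu1 _).symm
        | exact (hu2 _ _ (by decide)).symm

lemma commute_iff (x x' : F × F × F) (y y' : F × F) (z z' : F) :
    Commute (toUT x y z) (toUT x' y' z') ↔
      (x.1 * x'.2.1 = x'.1 * x.2.1 ∧ x.2.1 * x'.2.2 = x'.2.1 * x.2.2 ∧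
        x.1 * y'.2 + y.1 * x'.2.2 = x'.1 * y.2 + y'.1 * x.2.2) := by
  have : Commute (toUT x y z) (toUT x' y' z') ↔
      mat x y z * mat x' y' z' = mat x' y' z' * mat x y z := by
    rw [Commute, SemiconjBy, Subtype.ext_iff, Units.ext_iff]
    rfl
  rw [this, mat_mul, mat_mul]
  constructor
  · intro h
    obtain ⟨h1, h2, h3⟩ := mat_inj h
    simp only [Prod.ext_iff] at h1 h2
    obtain ⟨e1, e2, e3⟩ := h1
    obtain ⟨e4, e5⟩ := h2
    refine ⟨by linear_combination e4, by linear_combination e5, by linear_combination h3⟩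
  · rintro ⟨h1, h2, h3⟩
    exact mat_congr (Prod.ext (by ring) (Prod.ext (by ring) (by ring)))
      (Prod.ext (by linear_combination h1) (by linear_combination h2))
      (by linear_combination h3)

end

section
variable {F : Type*} [Field F]

-- generic splitting helper
lemma card_split {α : Type*} [Fintype α] (p r : α → Prop) :
    Nat.card {x // p x} = Nat.card {x // p x ∧ r x} + Nat.card {x // p x ∧ ¬ r x} := by
  classical
  simp only [Nat.card_eq_fintype_card, Fintype.card_subtype]
  rw [← Finset.filter_filter, ← Finset.filter_filter,
    Finset.card_filter_add_card_filter_not]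

lemma card_ne_zero [Fintype F] : Nat.card {u : F // u ≠ 0} = Fintype.card F - 1 := by
  classical
  rw [Nat.card_eq_fintype_card]
  have : Fintype.card {u : F // ¬ u = 0} = Fintype.card F - Fintype.card {u : F // u = 0} :=
    Fintype.card_subtype_compl _
  simpa [Fintype.card_subtype_eq] using this

lemma surj_fiber_card {G H : Type*} [AddCommGroup G] [AddCommGroup H]
    (f : G →+ H) (hs : Function.Surjective f) :
    Nat.card {x : G // f x = 0} * Nat.card H = Nat.card G := by
  classical
  have e : {x : G // f x = 0} ≃ f.ker :=
    Equiv.subtypeEquivRight (by intro x; simp [AddMonoidHom.mem_ker])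
  rw [Nat.card_congr e,
    AddSubgroup.card_eq_card_quotient_mul_card_addSubgroup f.ker,
    Nat.card_congr (QuotientAddGroup.quotientKerEquivOfSurjective f hs).toEquiv]
  ring

lemma lin_card [Fintype F] [DecidableEq F] (a b c d : F) :
    Nat.card {p : (F × F) × F × F //
        a * p.1.1 + b * p.1.2 + c * p.2.1 + d * p.2.2 = 0} =
      if a = 0 ∧ b = 0 ∧ c = 0 ∧ d = 0 then Fintype.card F ^ 4 else Fintype.card F ^ 3 := by
  classical
  split_ifs with h
  · obtain ⟨rfl, rfl, rfl, rfl⟩ := h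
    rw [Nat.card_congr (Equiv.subtypeUnivEquiv (by intro p; simp))]
    simp [Nat.card_eq_fintype_card]
    ring
  · set f : ((F × F) × F × F) →+ F :=
      { toFun := fun p => a * p.1.1 + b * p.1.2 + c * p.2.1 + d * p.2.2
        map_zero' := by simp
        map_add' := by intro p s; simp [Prod.fst_add, Prod.snd_add]; ring } with hf
    have hsurj : Function.Surjective f := by
      intro t
      by_cases ha : a = 0
      · by_cases hb : b = 0
        · by_cases hc : c = 0
          · have hd : d ≠ 0 := by tauto
            exact ⟨((0, 0), (0, d⁻¹ * t)), by simp [hf, ha, hb, hc, hd]⟩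
          · exact ⟨((0, 0), (c⁻¹ * t, 0)), by simp [hf, ha, hb, hc]⟩
        · exact ⟨((0, b⁻¹ * t), (0, 0)), by simp [hf, ha, hb]⟩
      · exact ⟨((a⁻¹ * t, 0), (0, 0)), by simp [hf, ha]⟩
    have key := surj_fiber_card f hsurj
    have hF : Nat.card F = Fintype.card F := Nat.card_eq_fintype_card
    have hG : Nat.card ((F × F) × F × F) = Fintype.card F ^ 4 := by
      simp [Nat.card_eq_fintype_card]; ring
    rw [hF, hG] at key
    have hpos : 0 < Fintype.card F := Fintype.card_pos
    have : Nat.card {p : (F × F) × F × F // f p = 0} * Fintype.card F =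
        Fintype.card F ^ 3 * Fintype.card F := by rw [key]; ring
    have hcard := Nat.eq_of_mul_eq_mul_right hpos this
    have e2 : {p : (F × F) × F × F //
        a * p.1.1 + b * p.1.2 + c * p.2.1 + d * p.2.2 = 0} ≃ {p // f p = 0} :=
      Equiv.subtypeEquivRight (fun p => by simp [hf])
    rw [Nat.card_congr e2]
    exact hcard
end


section
variable {F : Type*} [Field F]

def Pcond (s : (F × F × F) × (F × F × F)) : Prop :=
  s.1.1 * s.2.2.1 = s.2.1 * s.1.2.1 ∧ s.1.2.1 * s.2.2.2 = s.2.2.1 * s.1.2.2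

def eqA : {s : (F × F × F) × (F × F × F) // Pcond s ∧ ¬ s.1.2.1 = 0} ≃
    ({u : F // u ≠ 0} × F × F × F) where
  toFun s := (⟨s.1.1.2.1, s.2.2⟩, s.1.1.1, s.1.1.2.2, s.1.2.2.1)
  invFun t := ⟨((t.2.1, t.1.1, t.2.2.1),
      (t.2.1 * t.2.2.2 * t.1.1⁻¹, t.2.2.2, t.2.2.1 * t.2.2.2 * t.1.1⁻¹)),
    ⟨⟨by have h : (t.1 : F) ≠ 0 := t.1.2; field_simp; try ring,
      by have h : (t.1 : F) ≠ 0 := t.1.2; field_simp; try ring⟩, t.1.2⟩⟩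
  left_inv := by
    rintro ⟨⟨⟨x1, x2, x3⟩, x1', x2', x3'⟩, ⟨h1, h2⟩, hne⟩
    simp only [Pcond] at h1 h2
    refine Subtype.ext ?_
    refine Prod.ext rfl (Prod.ext ?_ (Prod.ext rfl ?_)) <;> dsimp <;> field_simp
    · linear_combination h1
    · linear_combination -h2
  right_inv := by rintro ⟨⟨u, hu⟩, x1, x3, x2'⟩; rfl

def eqB : {s : (F × F × F) × (F × F × F) // (Pcond s ∧ s.1.2.1 = 0) ∧ ¬ s.2.2.1 = 0} ≃
    ({u : F // u ≠ 0} × F × F) where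
  toFun s := (⟨s.1.2.2.1, s.2.2⟩, s.1.2.1, s.1.2.2.2)
  invFun t := ⟨((0, 0, 0), (t.2.1, t.1.1, t.2.2)),
    ⟨⟨by simp [Pcond], rfl⟩, t.1.2⟩⟩
  left_inv := by
    rintro ⟨⟨⟨x1, x2, x3⟩, x1', x2', x3'⟩, ⟨⟨h1, h2⟩, h0⟩, hne⟩
    simp only [Pcond] at h1 h2
    dsimp at h0 hne
    subst h0
    have hx1 : x1 = 0 := by
      rcases mul_eq_zero.mp (by linear_combination h1 : x1 * x2' = 0) with h | h
      · exact h
      · exact absurd h hne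
    have hx3 : x3 = 0 := by
      rcases mul_eq_zero.mp (by linear_combination -h2 : x2' * x3 = 0) with h | h
      · exact absurd h hne
      · exact h
    refine Subtype.ext ?_
    refine Prod.ext (Prod.ext ?_ (Prod.ext rfl ?_)) rfl <;> dsimp <;> simp [hx1, hx3]
  right_inv := by rintro ⟨⟨u, hu⟩, x1', x3'⟩; rfl

def eqC : {s : (F × F × F) × (F × F × F) // (Pcond s ∧ s.1.2.1 = 0) ∧ s.2.2.1 = 0} ≃
    (F × F × F × F) where
  toFun s := (s.1.1.1, s.1.1.2.2, s.1.2.1, s.1.2.2.2)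
  invFun t := ⟨((t.1, 0, t.2.1), (t.2.2.1, 0, t.2.2.2)),
    ⟨⟨by simp [Pcond], rfl⟩, rfl⟩⟩
  left_inv := by
    rintro ⟨⟨⟨x1, x2, x3⟩, x1', x2', x3'⟩, ⟨⟨h1, h2⟩, h0⟩, h0'⟩
    dsimp at h0 h0'
    subst h0; subst h0'
    rfl
  right_inv := by rintro ⟨x1, x3, x1', x3'⟩; rfl

lemma card_E12 [Fintype F] :
    Nat.card {s : (F × F × F) × (F × F × F) // Pcond s} =
      2 * Fintype.card F ^ 4 - Fintype.card F ^ 2 := by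
  classical
  have hq2 : 2 ≤ Fintype.card F := Fintype.one_lt_card
  rw [card_split Pcond (fun s => s.1.2.1 = 0),
    card_split (fun s : (F × F × F) × (F × F × F) => Pcond s ∧ s.1.2.1 = 0)
      (fun s => s.2.2.1 = 0),
    Nat.card_congr eqA, Nat.card_congr eqB, Nat.card_congr eqC]
  have cA : Nat.card ({u : F // u ≠ 0} × F × F × F) =
      (Fintype.card F - 1) * Fintype.card F ^ 3 := by
    rw [Nat.card_prod, Nat.card_prod, Nat.card_prod, card_ne_zero]
    simp only [Nat.card_eq_fintype_card]
    ring
  have cB : Nat.card ({u : F // u ≠ 0} × F × F) =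
      (Fintype.card F - 1) * Fintype.card F ^ 2 := by
    rw [Nat.card_prod, Nat.card_prod, card_ne_zero]
    simp only [Nat.card_eq_fintype_card]
    ring
  have cC : Nat.card (F × F × F × F) = Fintype.card F ^ 4 := by
    rw [Nat.card_prod, Nat.card_prod, Nat.card_prod]
    simp only [Nat.card_eq_fintype_card]
    ring
  rw [cA, cB, cC]
  have l1 : 1 ≤ Fintype.card F := by omega
  have l2 : Fintype.card F ^ 2 ≤ 2 * Fintype.card F ^ 4 :=
    le_trans (Nat.pow_le_pow_right (by omega) (by omega)) (Nat.le_mul_of_pos_left _ two_pos)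
  zify [l1, l2]
  ring
end
section
variable {F : Type*} [Field F]

def sigmaEquiv {α β : Type*} (p : α → Prop) (L : α → β → Prop) :
    {t : α × β // p t.1 ∧ L t.1 t.2} ≃ Σ a : {a // p a}, {b // L a.1 b} where
  toFun t := ⟨⟨t.1.1, t.2.1⟩, ⟨t.1.2, t.2.2⟩⟩
  invFun s := ⟨(s.1.1, s.2.1), s.1.2, s.2.2⟩
  left_inv t := rfl
  right_inv s := rfl

def prodFreeEquiv {α β : Type*} (p : α → Prop) :
    {t : α × β // p t.1} ≃ ({a // p a} × β) where
  toFun t := (⟨t.1.1, t.2⟩, t.1.2)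
  invFun s := ⟨(s.1.1, s.2), s.1.2⟩
  left_inv t := rfl
  right_inv s := rfl

def Zcond (a : (F × F × F) × (F × F × F)) : Prop :=
  a.2.2.2 = 0 ∧ a.2.1 = 0 ∧ a.1.2.2 = 0 ∧ a.1.1 = 0

def Lin (a : (F × F × F) × (F × F × F)) (b : (F × F) × (F × F)) : Prop :=
  a.1.1 * b.2.2 + b.1.1 * a.2.2.2 = a.2.1 * b.1.2 + b.2.1 * a.1.2.2

instance [DecidableEq F] (a : (F × F × F) × (F × F × F)) : Decidable (Zcond a) := by
  unfold Zcond; infer_instance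

lemma fiber_card [Fintype F] [DecidableEq F] (a : (F × F × F) × (F × F × F)) :
    Nat.card {b : (F × F) × (F × F) // Lin a b} =
      if Zcond a then Fintype.card F ^ 4 else Fintype.card F ^ 3 := by
  classical
  have e : {b : (F × F) × (F × F) // Lin a b} ≃
      {p : (F × F) × F × F //
        a.2.2.2 * p.1.1 + (-a.2.1) * p.1.2 + (-a.1.2.2) * p.2.1 + a.1.1 * p.2.2 = 0} :=
    Equiv.subtypeEquivRight (fun p => by
      simp only [Lin]
      constructor <;> intro h <;> linear_combination h)
  rw [Nat.card_congr e, lin_card]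
  exact if_congr (by simp only [neg_eq_zero, Zcond]) rfl rfl

def eqPZ : {a : (F × F × F) × (F × F × F) // Pcond a ∧ Zcond a} ≃ (F × F) where
  toFun a := (a.1.1.2.1, a.1.2.2.1)
  invFun t := ⟨((0, t.1, 0), (0, t.2, 0)), ⟨by simp [Pcond], by simp [Zcond]⟩⟩
  left_inv := by
    rintro ⟨⟨⟨x1, x2, x3⟩, x1', x2', x3'⟩, hP, h1, h2, h3, h4⟩
    dsimp [Zcond] at h1 h2 h3 h4
    subst h1; subst h2; subst h3; subst h4
    rfl
  right_inv := by rintro ⟨u, v⟩; rfl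

lemma card_PZ [Fintype F] :
    Nat.card {a : (F × F × F) × (F × F × F) // Pcond a ∧ Zcond a} = Fintype.card F ^ 2 := by
  classical
  rw [Nat.card_congr (eqPZ (F := F)), Nat.card_prod]
  simp only [Nat.card_eq_fintype_card]
  ring

lemma card_N1 [Fintype F] :
    Nat.card {s : ((F × F × F) × (F × F × F)) × ((F × F) × (F × F)) //
        Pcond s.1 ∧ Lin s.1 s.2} =
      Fintype.card F ^ 2 * Fintype.card F ^ 4 +
        (2 * Fintype.card F ^ 4 - Fintype.card F ^ 2 - Fintype.card F ^ 2) *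
          Fintype.card F ^ 3 := by
  classical
  rw [Nat.card_congr (sigmaEquiv Pcond Lin), Nat.card_eq_fintype_card, Fintype.card_sigma]
  have hfib : ∀ a : {a : (F × F × F) × (F × F × F) // Pcond a},
      Fintype.card {b : (F × F) × (F × F) // Lin a.1 b} =
        if Zcond a.1 then Fintype.card F ^ 4 else Fintype.card F ^ 3 := fun a => by
    rw [← Nat.card_eq_fintype_card, fiber_card]
  rw [Finset.sum_congr rfl (fun a _ => hfib a), Finset.sum_ite, Finset.sum_const,
    Finset.sum_const, smul_eq_mul, smul_eq_mul]
  have hZ : (Finset.univ.filter (fun a : {a : (F × F × F) × (F × F × F) // Pcond a} =>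
      Zcond a.1)).card = Fintype.card F ^ 2 := by
    rw [← Fintype.card_subtype, ← Nat.card_eq_fintype_card,
      Nat.card_congr (Equiv.subtypeSubtypeEquivSubtypeInter Pcond Zcond), card_PZ]
  have hsplit := Finset.card_filter_add_card_filter_not
    (s := (Finset.univ : Finset {a : (F × F × F) × (F × F × F) // Pcond a}))
    (p := fun a => Zcond a.1)
  rw [Finset.card_univ, ← Nat.card_eq_fintype_card, card_E12, hZ] at hsplit
  rw [hZ]
  have : (Finset.univ.filter (fun a : {a : (F × F × F) × (F × F × F) // Pcond a} =>
      ¬ Zcond a.1)).card = 2 * Fintype.card F ^ 4 - Fintype.card F ^ 2 - Fintype.card F ^ 2 := by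
    omega
  rw [this]

end

section
variable {F : Type*} [Field F]

lemma final_arith (q : ℕ) (h : 2 ≤ q) :
    (q^2*q^4 + (2*q^4 - q^2 - q^2)*q^3)*q^2 = (2*q^3+q^2-2*q) * q^6 ∧
    q ∣ 2*q^3+q^2-2*q ∧ (2*q^3+q^2-2*q) ≡ 1 [MOD q-1] := by
  have l0 : 1 ≤ q := by omega
  have lq3 : q ≤ q^3 := Nat.le_self_pow (by norm_num) q
  have lq24 : q^2 ≤ q^4 := Nat.pow_le_pow_right (by omega) (by omega)
  have l1a : q^2 ≤ 2*q^4 := by omega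
  have l1b : q^2 ≤ 2*q^4 - q^2 := by omega
  have l2 : 2*q ≤ 2*q^3 + q^2 := by omega
  have l3 : 2 ≤ 2*q^2 + q := by nlinarith
  refine ⟨by zify [l1a, l1b, l2]; ring, ⟨2*q^2 + q - 2, by zify [l2, l3]; ring⟩, ?_⟩
  have hk1 : 1 ≤ 2*q^3 + q^2 - 2*q := by
    have : 1 ≤ q^2 := by nlinarith
    omega
  refine ((Nat.modEq_iff_dvd' hk1).mpr ?_).symm
  obtain ⟨d, rfl⟩ : ∃ d, q = d + 2 := ⟨q - 2, by omega⟩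
  refine ⟨2*d^2 + 11*d + 15, ?_⟩
  have c1 : 2*(d+2) ≤ 2*(d+2)^3 + (d+2)^2 := by nlinarith
  have c2 : 1 ≤ 2*(d+2)^3 + (d+2)^2 - 2*(d+2) := by
    have e2 : 1 ≤ (d+2)^2 := Nat.one_le_iff_ne_zero.mpr (by positivity)
    omega

  zify [c1, c2, (by omega : 1 ≤ d + 2)]
  ring

def shuffle : ((((F × F × F) × (F × F)) × F) × (((F × F × F) × (F × F)) × F)) ≃
    ((((F × F × F) × (F × F × F)) × ((F × F) × (F × F))) × (F × F)) where
  toFun w := (((w.1.1.1, w.2.1.1), (w.1.1.2, w.2.1.2)), (w.1.2, w.2.2))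
  invFun t := (((t.1.1.1, t.1.2.1), t.2.1), ((t.1.1.2, t.1.2.2), t.2.2))
  left_inv w := rfl
  right_inv t := rfl

end
theorem stmt12 (F : Type*) [Field F] [Fintype F] :
    Nat.card (ConjClasses (UT 4 F)) =
      2 * (Fintype.card F) ^ 3 + (Fintype.card F) ^ 2 - 2 * Fintype.card F ∧
    Fintype.card F ∣ Nat.card (ConjClasses (UT 4 F)) ∧
    Nat.card (ConjClasses (UT 4 F)) ≡ 1 [MOD Fintype.card F - 1] := by
  classical
  obtain ⟨harith1, harith2, harith3⟩ := final_arith (Fintype.card F) Fintype.one_lt_card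
  have hU : Nat.card (UT 4 F) = Fintype.card F ^ 6 := by
    rw [← Nat.card_congr (utEquiv (F := F))]
    rw [Nat.card_prod, Nat.card_prod, Nat.card_prod, Nat.card_prod]
    simp only [Nat.card_eq_fintype_card]
    ring
  have hcond : ∀ w : ((((F × F × F) × (F × F)) × F) × (((F × F × F) × (F × F)) × F)),
      (Pcond (shuffle w).1.1 ∧ Lin (shuffle w).1.1 (shuffle w).1.2) ↔
        Commute ((Equiv.prodCongr utEquiv utEquiv) w).1
          ((Equiv.prodCongr utEquiv utEquiv) w).2 := by
    rintro ⟨⟨⟨x, y⟩, z⟩, ⟨⟨x', y'⟩, z'⟩⟩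
    rw [show ((Equiv.prodCongr utEquiv utEquiv) ((((x, y), z), ((x', y'), z')))) =
      (toUT x y z, toUT x' y' z') from rfl]
    dsimp only
    rw [_root_.commute_iff]
    simp only [Pcond, Lin, shuffle]
    exact ⟨fun ⟨⟨a, b⟩, c⟩ => ⟨a, b, c⟩, fun ⟨a, b, c⟩ => ⟨⟨a, b⟩, c⟩⟩
  have e0 := (Equiv.prodCongr (utEquiv (F := F)) (utEquiv (F := F))).subtypeEquiv
    (p := fun w => Pcond (shuffle w).1.1 ∧ Lin (shuffle w).1.1 (shuffle w).1.2)
    (q := fun p => Commute p.1 p.2) hcond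
  have e1 := e0.symm.trans (shuffle.subtypeEquiv
    (q := fun t => Pcond t.1.1 ∧ Lin t.1.1 t.1.2) (fun w => Iff.rfl))
  have hcomm : Nat.card {p : UT 4 F × UT 4 F // Commute p.1 p.2} =
      (Fintype.card F ^ 2 * Fintype.card F ^ 4 +
        (2 * Fintype.card F ^ 4 - Fintype.card F ^ 2 - Fintype.card F ^ 2) *
          Fintype.card F ^ 3) * Fintype.card F ^ 2 := by
    rw [Nat.card_congr e1,
      Nat.card_congr (prodFreeEquiv (fun t : ((F × F × F) × (F × F × F)) × ((F × F) × (F × F)) =>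
        Pcond t.1 ∧ Lin t.1 t.2)),
      Nat.card_prod, card_N1, Nat.card_prod]
    simp only [Nat.card_eq_fintype_card]
    ring
  have hb := card_comm_eq_card_conjClasses_mul_card (UT 4 F)
  rw [hcomm, hU, harith1] at hb
  have hk : Nat.card (ConjClasses (UT 4 F)) =
      2 * Fintype.card F ^ 3 + Fintype.card F ^ 2 - 2 * Fintype.card F :=
    (Nat.eq_of_mul_eq_mul_right (pow_pos Fintype.card_pos 6) hb).symm
  exact ⟨hk, by rw [hk]; exact harith2, by rw [hk]; exact harith3⟩
end

section
/- The derived subgroup of U_n(q) consists exactly of the upper unitriangular matrices whose first superdiagonal entries (positions (i,i+1)) are all zero, for n ≥ 2 and any prime power q. -/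
open Matrix

section Stmt16Aux
open scoped Classical commutatorElement
variable {n : ℕ} {F : Type*} [Field F]

lemma stmt16_sbneg (i j : Fin n) (c : F) :
    single i j (-c) = -single i j c := by
  ext p q; by_cases h : i = p ∧ j = q <;> simp [single, h]

lemma stmt16_tcomm {i k j : Fin n} (hik : i ≠ k) (hkj : k ≠ j) (hij : i ≠ j) (a b : F) :
    Matrix.transvection i k a * Matrix.transvection k j b * Matrix.transvection i k (-a) *
      Matrix.transvection k j (-b) = Matrix.transvection i j (a * b) := by
  have h1 := hik.symm; have h2 := hkj.symm; have h3 := hij.symm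
  simp only [Matrix.transvection, Matrix.add_mul, Matrix.mul_add, Matrix.one_mul, Matrix.mul_one,
    Matrix.single_mul_single_same, Matrix.single_mul_single_of_ne, h1, h2, h3,
    ne_eq, not_false_eq_true, add_zero, zero_add, Matrix.zero_mul, Matrix.mul_zero,
    neg_mul, mul_neg, neg_neg, stmt16_sbneg]
  abel

lemma stmt16_tri {i j : Fin n} (hij : i < j) (c : F) :
    IsUnitriangular (Matrix.transvection i j c) := by
  constructor
  · intro p
    have : ¬ (i = p ∧ j = p) := by rintro ⟨rfl, rfl⟩; exact absurd rfl hij.ne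
    simp [Matrix.transvection, Matrix.add_apply, Matrix.one_apply, Matrix.single, this]
  · intro p q hqp
    have : ¬ (i = p ∧ j = q) := by rintro ⟨rfl, rfl⟩; exact absurd hij (asymm hqp)
    simp [Matrix.transvection, Matrix.add_apply, Matrix.one_apply, (hqp.ne : q ≠ p).symm,
      Matrix.single, this]

/-- transvection as an element of GL. -/
def tGL (i j : Fin n) (hij : i ≠ j) (c : F) : GL (Fin n) F :=
  ⟨Matrix.transvection i j c, Matrix.transvection i j (-c),
    by rw [Matrix.transvection_mul_transvection_same _ _ hij, add_neg_cancel,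
      Matrix.transvection_zero],
    by rw [Matrix.transvection_mul_transvection_same _ _ hij, neg_add_cancel,
      Matrix.transvection_zero]⟩

/-- transvection as an element of UT. -/
def tUT (i j : Fin n) (hij : i < j) (c : F) : UT n F :=
  ⟨tGL i j hij.ne c, stmt16_tri hij c⟩

lemma tUT_val {i j : Fin n} (hij : i < j) (c : F) :
    (tUT i j hij c : UT n F).val.val = Matrix.transvection i j c := rfl

lemma tUT_inv_val {i j : Fin n} (hij : i < j) (c : F) :
    ((tUT i j hij c)⁻¹ : UT n F).val.val
      = Matrix.transvection i j (-c) := rfl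

lemma tUT_mem_commutator {i j : Fin n} (h2 : (i : ℕ) + 1 < (j : ℕ)) (c : F) :
    tUT i j (Fin.lt_def.mpr (by omega)) c ∈ commutator (UT n F) := by
  have hkn : (i : ℕ) + 1 < n := lt_trans h2 j.isLt
  set k : Fin n := ⟨(i : ℕ) + 1, hkn⟩ with hk
  have hik : i < k := Fin.lt_def.mpr (by simp [hk])
  have hkj : k < j := Fin.lt_def.mpr (by simp [hk]; omega)
  have hij : i < j := Fin.lt_def.mpr (by omega)
  have key : tUT i j (Fin.lt_def.mpr (by omega)) c = ⁅tUT i k hik c, tUT k j hkj 1⁆ := by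
    apply Subtype.ext; apply Units.ext
    show Matrix.transvection i j c = _
    have : (⁅tUT i k hik c, tUT k j hkj 1⁆ : UT n F).val.val
        = Matrix.transvection i k c * Matrix.transvection k j 1 *
          Matrix.transvection i k (-c) * Matrix.transvection k j (-1) := by
      rfl
    rw [this, stmt16_tcomm hik.ne hkj.ne hij.ne, mul_one]
  rw [key]
  exact Subgroup.commutator_mem_commutator (Subgroup.mem_top _) (Subgroup.mem_top _)


lemma stmt16_mul_superdiag {A B : Matrix (Fin n) (Fin n) F}
    (hA : ∀ p q : Fin n, q < p → A p q = 0) (hB : ∀ p q : Fin n, q < p → B p q = 0)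
    {i j : Fin n} (hj : (j : ℕ) = (i : ℕ) + 1) :
    (A * B) i j = A i i * B i j + A i j * B j j := by
  have hij : i ≠ j := by intro h; subst h; omega
  rw [Matrix.mul_apply, ← Finset.sum_subset (Finset.subset_univ ({i, j} : Finset (Fin n))) ?_,
    Finset.sum_pair hij]
  intro x _ hx
  simp only [Finset.mem_insert, Finset.mem_singleton, not_or] at hx
  rcases lt_or_ge (x : ℕ) (j : ℕ) with h | h
  · have hxi : x < i := by
      have : (x : ℕ) ≠ (i : ℕ) := fun hc => hx.1 (Fin.ext hc)
      exact Fin.lt_def.mpr (by omega)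
    rw [hA i x hxi, zero_mul]
  · have hjx : j < x := by
      have : (x : ℕ) ≠ (j : ℕ) := fun hc => hx.2 (Fin.ext hc)
      exact Fin.lt_def.mpr (by omega)
    rw [hB x j hjx, mul_zero]

lemma stmt16_forward (M : UT n F) (hM : M ∈ commutator (UT n F)) :
    ∀ i j : Fin n, (j : ℕ) = (i : ℕ) + 1 → M.val.val i j = 0 := by
  classical
  let f : UT n F → (Fin n → F) := fun A i =>
    if h : (i : ℕ) + 1 < n then A.val.val i ⟨(i : ℕ) + 1, h⟩ else 0
  have hmul : ∀ A B : UT n F, f (A * B) = f A + f B := by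
    intro A B
    funext i
    by_cases h : (i : ℕ) + 1 < n
    · simp only [f, dif_pos h, Pi.add_apply]
      have hAB : ((A * B : UT n F)).val.val = A.val.val * B.val.val := rfl
      rw [hAB, stmt16_mul_superdiag A.2.2 B.2.2 (by simp), A.2.1, B.2.1, one_mul, mul_one,
        add_comm]
    · simp [f, dif_neg h]
  let φ : UT n F →* Multiplicative (Fin n → F) :=
    MonoidHom.mk' (fun A => Multiplicative.ofAdd (f A))
      (by intro A B; show Multiplicative.ofAdd _ = _; rw [hmul]; rfl)
  have hker := Abelianization.commutator_subset_ker φ hM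
  have h1 : f M = 0 := hker
  intro i j hij
  have hn' : (i : ℕ) + 1 < n := by have := j.isLt; omega
  have hj : j = ⟨(i : ℕ) + 1, hn'⟩ := Fin.ext hij
  rw [hj]
  have h2 := congrFun h1 i
  simpa only [f, dif_pos hn', Pi.zero_apply] using h2


lemma stmt16_row : ∀ c : ℕ, ∀ M : UT n F, ∀ i : Fin n,
    (∀ p q : Fin n, (q : ℕ) = (p : ℕ) + 1 → M.val.val p q = 0) →
    (∀ p q : Fin n, p ≠ i → p ≠ q → M.val.val p q = 0) →
    (Finset.univ.filter fun j => M.val.val i j ≠ 0 ∧ i ≠ j).card ≤ c →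
    M ∈ commutator (UT n F) := by
  intro c
  induction c with
  | zero =>
    intro M i hsd hrow hcard
    have hone : M = 1 := by
      apply Subtype.ext; apply Units.ext
      ext p q
      show M.val.val p q = (1 : Matrix (Fin n) (Fin n) F) p q
      by_cases hpq : p = q
      · subst hpq; rw [M.2.1, Matrix.one_apply_eq]
      · rw [Matrix.one_apply_ne hpq]
        by_cases hpi : p = i
        · subst hpi
          by_contra hne
          have hmem : q ∈ Finset.univ.filter fun j => M.val.val p j ≠ 0 ∧ p ≠ j :=
            Finset.mem_filter.mpr ⟨Finset.mem_univ _, hne, hpq⟩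
          have := Finset.card_pos.mpr ⟨q, hmem⟩
          omega
        · exact hrow p q hpi hpq
    rw [hone]; exact one_mem _
  | succ c ih =>
    intro M i hsd hrow hcard
    set s := Finset.univ.filter fun j => M.val.val i j ≠ 0 ∧ i ≠ j with hs
    by_cases hne : s.Nonempty
    · obtain ⟨j₀, hj₀⟩ := hne
      obtain ⟨-, ha, hij0⟩ := Finset.mem_filter.mp hj₀
      have hlt : (i : ℕ) + 1 < (j₀ : ℕ) := by
        rcases lt_trichotomy i j₀ with h | h | h
        · have h1 : (j₀ : ℕ) ≠ (i : ℕ) + 1 := fun hc => ha (hsd i j₀ hc)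
          have h2 := Fin.lt_def.mp h
          omega
        · exact absurd h hij0
        · exact absurd (M.2.2 i j₀ h) ha
      set a := M.val.val i j₀ with haa
      set T := tUT i j₀ (Fin.lt_def.mpr (by omega)) a with hT
      have hTmem : T ∈ commutator (UT n F) := tUT_mem_commutator hlt a
      set M' := T⁻¹ * M with hM'
      have hval : M'.val.val = Matrix.transvection i j₀ (-a) * M.val.val := rfl
      have hrow' : ∀ q, M'.val.val i q = if q = j₀ then 0 else M.val.val i q := by
        intro q
        rw [hval, Matrix.transvection_mul_apply_same]
        by_cases hq : q = j₀
        · subst hq; rw [if_pos rfl, M.2.1]; ring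
        · rw [if_neg hq]
          have h0 : M.val.val j₀ q = 0 :=
            hrow j₀ q (Ne.symm hij0) (fun h => hq h.symm)
          rw [h0, mul_zero, add_zero]
      have hother : ∀ p q, p ≠ i → M'.val.val p q = M.val.val p q := by
        intro p q hpi
        rw [hval, Matrix.transvection_mul_apply_of_ne _ _ _ _ hpi]
      have hmem' : M' ∈ commutator (UT n F) := by
        apply ih M' i
        · intro p q hq
          by_cases hpi : p = i
          · subst hpi
            rw [hrow' q, if_neg (by intro h; subst h; omega)]
            exact hsd p q hq
          · rw [hother p q hpi]; exact hsd p q hq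
        · intro p q hpi hpq; rw [hother p q hpi]; exact hrow p q hpi hpq
        · have hsub : (Finset.univ.filter fun j => M'.val.val i j ≠ 0 ∧ i ≠ j) ⊆ s.erase j₀ := by
            intro x hx
            obtain ⟨-, hx1, hx2⟩ := Finset.mem_filter.mp hx
            have hxj : x ≠ j₀ := by
              intro h; subst h; rw [hrow' _, if_pos rfl] at hx1; exact hx1 rfl
            refine Finset.mem_erase.mpr ⟨hxj, Finset.mem_filter.mpr ⟨Finset.mem_univ _, ?_, hx2⟩⟩
            rwa [hrow' x, if_neg hxj] at hx1
          have h1 := Finset.card_le_card hsub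
          rw [Finset.card_erase_of_mem hj₀] at h1
          have h2 := Finset.card_pos.mpr ⟨j₀, hj₀⟩
          omega
      have hMeq : M = T * M' := by rw [hM']; group
      rw [hMeq]; exact mul_mem hTmem hmem'
    · apply ih M i hsd hrow
      rw [Finset.not_nonempty_iff_eq_empty] at hne
      rw [← hs, hne]
      simp


lemma stmt16_inv1 (X : Matrix (Fin n) (Fin n) F) (h : X * X = 0) : (1 + X) * (1 - X) = 1 := by
  rw [Matrix.mul_sub, Matrix.add_mul, Matrix.add_mul, Matrix.mul_one, Matrix.one_mul, h, Matrix.mul_one]; abel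

lemma stmt16_inv2 (X : Matrix (Fin n) (Fin n) F) (h : X * X = 0) : (1 - X) * (1 + X) = 1 := by
  rw [Matrix.mul_add, Matrix.sub_mul, Matrix.sub_mul, Matrix.mul_one, Matrix.one_mul, h, Matrix.mul_one]; abel

lemma stmt16_rows : ∀ r : ℕ, ∀ M : UT n F,
    (∀ p q : Fin n, (q : ℕ) = (p : ℕ) + 1 → M.val.val p q = 0) →
    (∀ p q : Fin n, r ≤ (p : ℕ) → p ≠ q → M.val.val p q = 0) →
    M ∈ commutator (UT n F) := by
  intro r
  induction r with
  | zero =>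
    intro M hsd hrow
    have hone : M = 1 := by
      apply Subtype.ext; apply Units.ext; ext p q
      show M.val.val p q = (1 : Matrix (Fin n) (Fin n) F) p q
      by_cases hpq : p = q
      · subst hpq; rw [M.2.1, Matrix.one_apply_eq]
      · rw [Matrix.one_apply_ne hpq, hrow p q (Nat.zero_le _) hpq]
    rw [hone]; exact one_mem _
  | succ r ih =>
    intro M hsd hrow
    by_cases hr : r < n
    case neg =>
      apply ih M hsd
      intro p q hp hpq
      exact absurd (lt_of_le_of_lt hp p.isLt) (by omega)
    case pos =>
    set i : Fin n := ⟨r, hr⟩ with hi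
    set N : Matrix (Fin n) (Fin n) F :=
      Matrix.of fun p q => if p = i ∧ q ≠ i then M.val.val p q else 0 with hNd
    have hNapp : ∀ p q, N p q = if p = i ∧ q ≠ i then M.val.val p q else 0 := fun p q => rfl
    have hNN : N * N = 0 := by
      ext p q
      rw [Matrix.mul_apply]
      rw [show (0 : Matrix (Fin n) (Fin n) F) p q = 0 from rfl]
      apply Finset.sum_eq_zero
      intro a _
      by_cases h1 : p = i ∧ a ≠ i
      · have h2 : ¬ (a = i ∧ q ≠ i) := fun hc => h1.2 hc.1
        rw [hNapp a q, if_neg h2, mul_zero]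
      · rw [hNapp p a, if_neg h1, zero_mul]
    have hmulinv : (1 + N) * (1 - N) = 1 := stmt16_inv1 N hNN
    have hmulinv2 : (1 - N) * (1 + N) = 1 := stmt16_inv2 N hNN
    set Rg : GL (Fin n) F := ⟨1 + N, 1 - N, hmulinv, hmulinv2⟩ with hRg
    have hRtri : IsUnitriangular (1 + N) := by
      constructor
      · intro p
        have h1 : ¬ (p = i ∧ p ≠ i) := fun h => h.2 h.1
        rw [Matrix.add_apply, Matrix.one_apply_eq, hNapp p p, if_neg h1, add_zero]
      · intro p q hqp
        rw [Matrix.add_apply, Matrix.one_apply_ne (Ne.symm hqp.ne)]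
        by_cases h : p = i ∧ q ≠ i
        · rw [hNapp p q, if_pos h, M.2.2 p q hqp, zero_add]
        · rw [hNapp p q, if_neg h, add_zero]
    set R : UT n F := ⟨Rg, hRtri⟩ with hR
    set M' := R⁻¹ * M with hM'
    have hval : M'.val.val = (1 - N) * M.val.val := rfl
    have hother : ∀ p q, p ≠ i → M'.val.val p q = M.val.val p q := by
      intro p q hpi
      rw [hval, Matrix.sub_mul, Matrix.one_mul, Matrix.sub_apply]
      have h0 : (N * M.val.val) p q = 0 := by
        rw [Matrix.mul_apply]; apply Finset.sum_eq_zero; intro a _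
        have h1 : ¬ (p = i ∧ a ≠ i) := fun h => hpi h.1
        rw [hNapp p a, if_neg h1, zero_mul]
      rw [h0, sub_zero]
    have hrowi : ∀ q, M'.val.val i q = if q = i then 1 else 0 := by
      intro q
      rw [hval, Matrix.sub_mul, Matrix.one_mul, Matrix.sub_apply]
      have hNM : (N * M.val.val) i q = if q = i then 0 else M.val.val i q := by
        rw [Matrix.mul_apply]
        refine (Finset.sum_eq_single q ?_ ?_).trans ?_
        · intro a _ haq
          by_cases h1 : a = i
          · rw [hNapp i a, if_neg (fun hc => hc.2 h1), zero_mul]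
          · by_cases h2 : M.val.val i a = 0
            · rw [hNapp i a, if_pos ⟨rfl, h1⟩, h2, zero_mul]
            · have hia : i < a := by
                rcases lt_trichotomy i a with h | h | h
                · exact h
                · exact absurd h.symm h1
                · exact absurd (M.2.2 i a h) h2
              have h3 : M.val.val a q = 0 := by
                apply hrow a q _ haq
                have h4 := Fin.lt_def.mp hia
                simp only [hi] at h4
                omega
              rw [h3, mul_zero]
        · intro h; exact absurd (Finset.mem_univ q) h
        · by_cases hq : q = i
          · rw [hNapp i q, if_neg (fun hc => hc.2 hq), zero_mul, if_pos hq]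
          · rw [hNapp i q, if_pos ⟨rfl, hq⟩, M.2.1 q, mul_one, if_neg hq]
      rw [hNM]
      by_cases hq : q = i
      · subst hq; rw [if_pos rfl, if_pos rfl, M.2.1, sub_zero]
      · rw [if_neg hq, if_neg hq, sub_self]
    have hmem' : M' ∈ commutator (UT n F) := by
      apply ih M'
      · intro p q hq
        by_cases hpi : p = i
        · subst hpi
          rw [hrowi q, if_neg (by intro h; subst h; omega)]
        · rw [hother p q hpi]; exact hsd p q hq
      · intro p q hp hpq
        by_cases hpi : p = i
        · subst hpi
          rw [hrowi q, if_neg (fun h => hpq h.symm)]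
        · rw [hother p q hpi]
          apply hrow p q _ hpq
          have h5 : (p : ℕ) ≠ r := fun h => hpi (Fin.ext (h.trans rfl))
          omega
    have hRmem : R ∈ commutator (UT n F) := by
      apply stmt16_row ((Finset.univ.filter fun j => R.val.val i j ≠ 0 ∧ i ≠ j).card) R i ?_ ?_
        le_rfl
      · intro p q hq
        show (1 + N) p q = 0
        have hpq : p ≠ q := by intro h; subst h; omega
        rw [Matrix.add_apply, Matrix.one_apply_ne hpq]
        by_cases h : p = i ∧ q ≠ i
        · rw [hNapp p q, if_pos h, hsd p q hq, zero_add]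
        · rw [hNapp p q, if_neg h, add_zero]
      · intro p q hpi hpq
        show (1 + N) p q = 0
        rw [Matrix.add_apply, Matrix.one_apply_ne hpq]
        have h1 : ¬ (p = i ∧ q ≠ i) := fun h => hpi h.1
        rw [hNapp p q, if_neg h1, add_zero]
    have hMeq : M = R * M' := by rw [hM']; group
    rw [hMeq]; exact mul_mem hRmem hmem'

end Stmt16Aux

theorem stmt16 (n : ℕ) (hn : 2 ≤ n) (F : Type*) [Field F] [Fintype F] :
    ∀ M : UT n F, M ∈ commutator (UT n F) ↔
      ∀ i j : Fin n, (j : ℕ) = (i : ℕ) + 1 →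
        (M.val : Matrix (Fin n) (Fin n) F) i j = 0 := by
  intro M
  constructor
  · intro hM i j hij
    exact stmt16_forward M hM i j hij
  · intro hsd
    apply stmt16_rows n M hsd
    intro p q hp hpq
    exact absurd p.isLt (not_lt.mpr hp)
end
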